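/- (Powers of annihilation operators on the vectors ξ_{r,s}) Under the q-commutation hypotheses below, for all natural numbers r, s, m one has (c*)^m·ξ_{r,s} = ∑_{i+j=m, i,j≥0} ([r]_q!/[r-j]_q!)·([s]_q!/[s-i]_q!)·binom(m,i)_q·q^{(k+r-j)·i}·ξ_{r-j,s-i} and (c_r*)^m·ξ_{r,s} = ∑_{i+j=m, i,j≥0} ([r]_q!/[r-i]_q!)·([s]_q!/[s-j]_q!)·binom(m,i)_q·q^{(k+s-j)·i}·ξ_{r-i,s-j}, where any term whose index ξ_{a,b} would have a < 0 or b < 0 is interpreted as 0 (equivalently, in the first sum only terms with j ≤ r and i ≤ s contribute). -/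

import Mathlib

open ContinuousLinearMap

/-- The q-integer `[n]_q = (1 - q^n)/(1 - q)`. -/
noncomputable def qInt (q : ℝ) (n : ℕ) : ℝ := (1 - q ^ n) / (1 - q)

/-- The q-factorial `[n]_q! = [1]_q ⋯ [n]_q`, with `[0]_q! = 1`. -/
noncomputable def qFact (q : ℝ) : ℕ → ℝ
  | 0 => 1
  | n + 1 => qFact q n * qInt q (n + 1)

/-- The q-binomial coefficient `binom(n,m)_q`, with value `0` when `m > n`. -/
noncomputable def qBinom (q : ℝ) (n m : ℕ) : ℝ :=
  if m ≤ n then qFact q n / (qFact q m * qFact q (n - m)) else 0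

/-!
On the vectors `ξ_{r,s}` the commutation relations give
`c* ξ_{r,s} = [r]_q ξ_{r-1,s} + q^(k+r) [s]_q ξ_{r,s-1}`, so `c*` acts as the sum of two lowering
maps. Rescaling `ξ_{r-j,s-i}` by the falling q-factorials `[r]_q ⋯ [r-j+1]_q`, `[s]_q ⋯ [s-i+1]_q`
and by `q^((k+r-j) i)` to vectors `u_{i,j}` turns these maps into the shifts
`u_{i,j} ↦ q^i u_{i,j+1}` and `u_{i,j} ↦ u_{i+1,j}`, which q-commute. Iterating with the q-Pascal
rule then expands `(c*)^m` exactly as in the q-binomial theorem. Since `c` and `c_r` commute, the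
formula for `c_r*` is the same one with the roles of `c` and `c_r` exchanged.
-/

-- `[n]_q [n-1]_q ⋯ [n-j+1]_q`; the factor `[0]_q` makes it vanish for `j > n`, so the expansion
-- needs no case distinction on the range of its indices.
noncomputable def qDescFact (q : ℝ) (n : ℕ) : ℕ → ℝ
  | 0 => 1
  | j + 1 => qDescFact q n j * qInt q (n - j)

section QNumbers

variable {q : ℝ}

@[simp]
lemma qInt_zero : qInt q 0 = 0 := by simp [qInt]

lemma qInt_add (hq : q ≠ 1) (a b : ℕ) : qInt q (a + b) = qInt q a + q ^ a * qInt q b := by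
  have : 1 - q ≠ 0 := sub_ne_zero.mpr hq.symm
  unfold qInt
  field_simp
  ring

lemma qInt_one (hq : q ≠ 1) : qInt q 1 = 1 := by
  rw [qInt, pow_one, div_self (sub_ne_zero.mpr hq.symm)]

lemma qInt_pos (hq₁ : -1 < q) (hq₂ : q < 1) {n : ℕ} (hn : n ≠ 0) : 0 < qInt q n := by
  have : |q ^ n| < 1 := by
    rw [abs_pow]
    exact pow_lt_one₀ (abs_nonneg q) (abs_lt.mpr ⟨hq₁, hq₂⟩) hn
  exact div_pos (by linarith [(abs_lt.mp this).2]) (by linarith)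

lemma qFact_ne_zero (hq₁ : -1 < q) (hq₂ : q < 1) (n : ℕ) : qFact q n ≠ 0 := by
  induction n with
  | zero => simp [qFact]
  | succ n ih => exact mul_ne_zero ih (qInt_pos hq₁ hq₂ n.succ_ne_zero).ne'

lemma qDescFact_eq_zero_of_lt {n j : ℕ} (h : n < j) : qDescFact q n j = 0 := by
  induction j with
  | zero => omega
  | succ j ih =>
    rcases Nat.lt_succ_iff_lt_or_eq.mp h with h | rfl
    · simp [qDescFact, ih h]
    · simp [qDescFact]

lemma qFact_mul_qDescFact {n j : ℕ} (h : j ≤ n) :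
    qFact q (n - j) * qDescFact q n j = qFact q n := by
  induction j with
  | zero => simp [qDescFact]
  | succ j ih =>
    obtain ⟨d, hd⟩ : ∃ d, n - j = d + 1 := ⟨n - j - 1, by omega⟩
    rw [qDescFact, ← ih (by omega), hd, show n - (j + 1) = d by omega, qFact]
    ring

lemma qDescFact_eq_div (hq₁ : -1 < q) (hq₂ : q < 1) {n j : ℕ} (h : j ≤ n) :
    qDescFact q n j = qFact q n / qFact q (n - j) := by
  rw [← qFact_mul_qDescFact h, mul_div_cancel_left₀ _ (qFact_ne_zero hq₁ hq₂ _)]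

lemma qBinom_zero_right (hq₁ : -1 < q) (hq₂ : q < 1) (n : ℕ) : qBinom q n 0 = 1 := by
  simp [qBinom, qFact, qFact_ne_zero hq₁ hq₂]

lemma qBinom_self (hq₁ : -1 < q) (hq₂ : q < 1) (n : ℕ) : qBinom q n n = 1 := by
  simp [qBinom, qFact, qFact_ne_zero hq₁ hq₂]

lemma qBinom_of_lt {n i : ℕ} (h : n < i) : qBinom q n i = 0 := if_neg (by omega)

lemma qBinom_succ_succ (hq₁ : -1 < q) (hq₂ : q < 1) (n i : ℕ) :
    qBinom q (n + 1) (i + 1) = qBinom q n (i + 1) * q ^ (i + 1) + qBinom q n i := by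
  rcases le_or_gt (i + 1) n with h | h
  · obtain ⟨d, rfl⟩ := Nat.exists_eq_add_of_le h
    have hsum : qInt q (i + 1 + d + 1) = qInt q (i + 1) + q ^ (i + 1) * qInt q (d + 1) := by
      rw [← qInt_add hq₂.ne, add_assoc]
    simp only [qBinom, if_pos (by omega : i + 1 ≤ i + 1 + d + 1), if_pos h,
      if_pos (by omega : i ≤ i + 1 + d), Nat.add_sub_cancel_left,
      show i + 1 + d + 1 - (i + 1) = d + 1 by omega, show i + 1 + d - i = d + 1 by omega]
    have := qFact_ne_zero hq₁ hq₂
    have := qInt_pos hq₁ hq₂ (n := i + 1) (by omega)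
    have := qInt_pos hq₁ hq₂ (n := d + 1) (by omega)
    simp only [qFact, hsum]
    field_simp
    ring
  · rcases (Nat.lt_succ_iff_lt_or_eq.mp h) with h | rfl
    · simp [qBinom_of_lt, h, qBinom_of_lt (by omega : n < i + 1)]
    · simp [qBinom_self hq₁ hq₂, qBinom_of_lt]

end QNumbers

section QBinomialIteration

open Finset

variable {q : ℝ} {M : Type*} [AddCommGroup M] [Module ℂ M]

lemma sum_antidiagonal_qBinom_succ_smul (hq₁ : -1 < q) (hq₂ : q < 1) (f : ℕ → ℕ → M) (n : ℕ) :
    ∑ p ∈ antidiagonal (n + 1), (qBinom q (n + 1) p.1 : ℂ) • f p.1 p.2 =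
      ∑ p ∈ antidiagonal n, ((qBinom q n p.1 : ℂ) * (q : ℂ) ^ p.1) • f p.1 (p.2 + 1) +
        ∑ p ∈ antidiagonal n, (qBinom q n p.1 : ℂ) • f (p.1 + 1) p.2 := by
  have hlow : ∑ p ∈ antidiagonal n, ((qBinom q n p.1 : ℂ) * (q : ℂ) ^ p.1) • f p.1 (p.2 + 1) =
      f 0 (n + 1) + ∑ p ∈ antidiagonal n, ((qBinom q n (p.1 + 1) : ℂ) * (q : ℂ) ^ (p.1 + 1)) •
        f (p.1 + 1) p.2 := by
    have h := Nat.sum_antidiagonal_succ' (n := n)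
      (f := fun p => ((qBinom q n p.1 : ℂ) * (q : ℂ) ^ p.1) • f p.1 p.2)
    rw [Nat.sum_antidiagonal_succ] at h
    simpa [qBinom_of_lt, qBinom_zero_right hq₁ hq₂] using h.symm
  rw [hlow, Nat.sum_antidiagonal_succ, add_assoc, ← sum_add_distrib]
  simp only [qBinom_zero_right hq₁ hq₂, qBinom_succ_succ hq₁ hq₂, ← add_smul]
  push_cast
  rw [one_smul]

theorem pow_apply_eq_sum_qBinom (hq₁ : -1 < q) (hq₂ : q < 1) (T : Module.End ℂ M)
    (u : ℕ → ℕ → M) (hT : ∀ i j, T (u i j) = (q : ℂ) ^ i • u i (j + 1) + u (i + 1) j) (m : ℕ) :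
    (T ^ m) (u 0 0) = ∑ p ∈ antidiagonal m, (qBinom q m p.1 : ℂ) • u p.1 p.2 := by
  induction m with
  | zero => simp [qBinom_zero_right hq₁ hq₂]
  | succ m ih =>
    rw [pow_succ', Module.End.mul_apply, ih, map_sum, sum_antidiagonal_qBinom_succ_smul hq₁ hq₂,
      ← sum_add_distrib]
    refine sum_congr rfl fun p _ => ?_
    rw [map_smul, hT, smul_add, smul_smul]

end QBinomialIteration

section QCommutation

variable {q : ℝ} {A : Type*} [Ring A] [Algebra ℂ A]

lemma mul_pow_succ_of_mul_eq_smul_add_one (hq : q ≠ 1) {a c : A}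
    (h : a * c = (q : ℂ) • (c * a) + 1) (n : ℕ) :
    a * c ^ (n + 1) = (q : ℂ) ^ (n + 1) • (c ^ (n + 1) * a) + (qInt q (n + 1) : ℂ) • c ^ n := by
  induction n with
  | zero => simp [h, qInt_one hq]
  | succ n ih =>
    have hcoeff : (qInt q (n + 1 + 1) : ℂ) = (q : ℂ) ^ (n + 1) + qInt q (n + 1) := by
      rw [qInt_add hq (n + 1) 1, qInt_one hq]; push_cast; ring
    calc a * c ^ (n + 1 + 1) = (a * c ^ (n + 1)) * c := by rw [mul_assoc, ← pow_succ]
      _ = (q : ℂ) ^ (n + 1) • (c ^ (n + 1) * (a * c)) + (qInt q (n + 1) : ℂ) • c ^ (n + 1) := by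
        rw [ih, add_mul, smul_mul_assoc, smul_mul_assoc, mul_assoc, ← pow_succ]
      _ = _ := by
        rw [h, hcoeff, mul_add, mul_smul_comm, ← mul_assoc, ← pow_succ, mul_one]
        module

lemma mul_pow_succ_of_mul_eq_add (hq : q ≠ 1) {a d W : A} (h : a * d = d * a + W)
    (hW : W * d = (q : ℂ) • (d * W)) (n : ℕ) :
    a * d ^ (n + 1) = d ^ (n + 1) * a + (qInt q (n + 1) : ℂ) • (d ^ n * W) := by
  induction n with
  | zero => simp [h, qInt_one hq]
  | succ n ih =>
    have hcoeff : (qInt q (n + 1 + 1) : ℂ) = 1 + (q : ℂ) * qInt q (n + 1) := by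
      rw [show n + 1 + 1 = 1 + (n + 1) by ring, qInt_add hq 1 (n + 1), qInt_one hq]; push_cast; ring
    calc a * d ^ (n + 1 + 1) = (a * d ^ (n + 1)) * d := by rw [mul_assoc, ← pow_succ]
      _ = d ^ (n + 1) * (a * d) + (qInt q (n + 1) : ℂ) • (d ^ n * (W * d)) := by
        rw [ih, add_mul, smul_mul_assoc, mul_assoc, mul_assoc]
      _ = _ := by
        rw [h, hW, hcoeff, mul_add, mul_smul_comm]
        simp only [← mul_assoc, ← pow_succ]
        module

end QCommutation

section Annihilation

open Finset

variable {q : ℝ} {E : Type*} [NormedAddCommGroup E] [NormedSpace ℂ E] {a c d W : E →L[ℂ] E}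
  {k : ℕ} {ξ : E}

lemma annihilation_apply_pow_apply (hq : q ≠ 1) (had : a * d = d * a + W)
    (hWd : W * d = (q : ℂ) • (d * W)) (haξ : a ξ = 0) (hWξ : W ξ = (q : ℂ) ^ k • ξ) (s : ℕ) :
    a ((d ^ s) ξ) = ((q ^ k * qInt q s : ℝ) : ℂ) • (d ^ (s - 1)) ξ := by
  cases s with
  | zero => simp [haξ]
  | succ s =>
    have h := DFunLike.congr_fun (mul_pow_succ_of_mul_eq_add hq had hWd s) ξ
    simp only [mul_apply_eq_comp, add_apply, smul_apply, haξ, hWξ, map_zero, map_smul,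
      zero_add] at h
    rw [h, smul_smul, Nat.add_sub_cancel]
    push_cast
    ring_nf

lemma annihilation_apply_xi (hq : q ≠ 1) (hac : a * c = (q : ℂ) • (c * a) + 1)
    (had : a * d = d * a + W) (hWd : W * d = (q : ℂ) • (d * W)) (haξ : a ξ = 0)
    (hWξ : W ξ = (q : ℂ) ^ k • ξ) (r s : ℕ) :
    a ((c ^ r * d ^ s) ξ) = (qInt q r : ℂ) • (c ^ (r - 1) * d ^ s) ξ +
      ((q ^ (k + r) * qInt q s : ℝ) : ℂ) • (c ^ r * d ^ (s - 1)) ξ := by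
  have hd := annihilation_apply_pow_apply hq had hWd haξ hWξ s
  cases r with
  | zero => simpa using hd
  | succ r =>
    have h := DFunLike.congr_fun (mul_pow_succ_of_mul_eq_smul_add_one hq hac r) ((d ^ s) ξ)
    simp only [mul_apply_eq_comp, add_apply, smul_apply, hd, map_smul] at h
    simp only [mul_apply_eq_comp, h, Nat.add_sub_cancel, smul_smul]
    push_cast
    rw [add_comm]
    ring_nf

-- The vector `u_{i,j}`: `i` counts the lowerings of `s`, `j` those of `r`.
noncomputable def weightedXi (q : ℝ) (k r s : ℕ) (c d : E →L[ℂ] E) (ξ : E) (i j : ℕ) : E :=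
  ((qDescFact q r j * qDescFact q s i * q ^ ((k + (r - j)) * i) : ℝ) : ℂ) •
    (c ^ (r - j) * d ^ (s - i)) ξ

lemma annihilation_apply_weightedXi (hq : q ≠ 1) (hac : a * c = (q : ℂ) • (c * a) + 1)
    (had : a * d = d * a + W) (hWd : W * d = (q : ℂ) • (d * W)) (haξ : a ξ = 0)
    (hWξ : W ξ = (q : ℂ) ^ k • ξ) (r s i j : ℕ) :
    a (weightedXi q k r s c d ξ i j) =
      (q : ℂ) ^ i • weightedXi q k r s c d ξ i (j + 1) + weightedXi q k r s c d ξ (i + 1) j := by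
  have hj : qInt q (r - j) * q ^ ((k + (r - j)) * i) =
      q ^ i * (qInt q (r - j) * q ^ ((k + (r - (j + 1))) * i)) := by
    cases h : r - j with
    | zero => simp
    | succ t =>
      rw [show r - (j + 1) = t by omega]
      ring
  simp only [weightedXi, map_smul, annihilation_apply_xi hq hac had hWd haξ hWξ, smul_add,
    smul_smul, Nat.sub_sub, qDescFact]
  congr 1
  · congr 1
    norm_cast
    linear_combination qDescFact q r j * qDescFact q s i * hj
  · congr 1
    norm_cast
    ring

theorem annihilation_pow_apply_xi (hq₁ : -1 < q) (hq₂ : q < 1)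
    (hac : a * c = (q : ℂ) • (c * a) + 1) (had : a * d = d * a + W)
    (hWd : W * d = (q : ℂ) • (d * W)) (haξ : a ξ = 0)
    (hWξ : W ξ = (q : ℂ) ^ k • ξ) (r s m : ℕ) :
    (a ^ m) ((c ^ r * d ^ s) ξ) =
      ∑ i ∈ range (m + 1),
        if m - i ≤ r ∧ i ≤ s then
          ((qFact q r / qFact q (r - (m - i)) * (qFact q s / qFact q (s - i)) *
            qBinom q m i * q ^ ((k + r - (m - i)) * i) : ℝ) : ℂ) •
            ((c ^ (r - (m - i)) * d ^ (s - i)) ξ)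
        else 0 := by
  have hexp := pow_apply_eq_sum_qBinom hq₁ hq₂ (toLinearMapRingHom a)
    (weightedXi q k r s c d ξ) (annihilation_apply_weightedXi hq₂.ne hac had hWd haξ hWξ r s) m
  have h00 : weightedXi q k r s c d ξ 0 0 = (c ^ r * d ^ s) ξ := by simp [weightedXi, qDescFact]
  rw [← map_pow, h00, Nat.sum_antidiagonal_eq_sum_range_succ
    (fun i j => (qBinom q m i : ℂ) • weightedXi q k r s c d ξ i j)] at hexp
  refine hexp.trans (sum_congr rfl fun i _ => ?_)
  split_ifs with h
  · rw [weightedXi, smul_smul, qDescFact_eq_div hq₁ hq₂ h.1, qDescFact_eq_div hq₁ hq₂ h.2,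
      Nat.add_sub_assoc h.1]
    congr 1
    push_cast
    ring
  · rcases not_and_or.mp h with h | h <;> simp [weightedXi, qDescFact_eq_zero_of_lt (not_le.mp h)]

end Annihilation

theorem annihilation_pow_on_xi_general (q : ℝ) (hq₁ : -1 < q) (hq₂ : q < 1)
    {H : Type*} [NormedAddCommGroup H] [InnerProductSpace ℂ H] [CompleteSpace H]
    (c cr W : H →L[ℂ] H)
    (h1 : adjoint c * c = (q : ℂ) • (c * adjoint c) + 1)
    (h2 : adjoint cr * cr = (q : ℂ) • (cr * adjoint cr) + 1)
    (h3 : c * cr = cr * c)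
    (h4 : adjoint c * cr = cr * adjoint c + W)
    (h5 : adjoint cr * c = c * adjoint cr + W)
    (h6 : W * c = (q : ℂ) • (c * W))
    (h7 : W * cr = (q : ℂ) • (cr * W))
    (k : ℕ) (ξ : H)
    (hc : adjoint c ξ = 0) (hcr : adjoint cr ξ = 0)
    (hW : W ξ = ((q : ℂ) ^ k) • ξ) (r s m : ℕ) :
    (((adjoint c) ^ m) ((c ^ r * cr ^ s) ξ) =
      ∑ i ∈ Finset.range (m + 1),
        if m - i ≤ r ∧ i ≤ s then
          ((qFact q r / qFact q (r - (m - i)) * (qFact q s / qFact q (s - i)) *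
            qBinom q m i * q ^ ((k + r - (m - i)) * i) : ℝ) : ℂ) •
            ((c ^ (r - (m - i)) * cr ^ (s - i)) ξ)
        else 0) ∧
    (((adjoint cr) ^ m) ((c ^ r * cr ^ s) ξ) =
      ∑ i ∈ Finset.range (m + 1),
        if i ≤ r ∧ m - i ≤ s then
          ((qFact q r / qFact q (r - i) * (qFact q s / qFact q (s - (m - i))) *
            qBinom q m i * q ^ ((k + s - (m - i)) * i) : ℝ) : ℂ) •
            ((c ^ (r - i) * cr ^ (s - (m - i))) ξ)
        else 0) := by
  refine ⟨annihilation_pow_apply_xi hq₁ hq₂ h1 h4 h7 hc hW r s m, ?_⟩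
  rw [(Commute.pow_pow h3 r s).eq, annihilation_pow_apply_xi hq₁ hq₂ h2 h5 h6 hcr hW s r m]
  refine Finset.sum_congr rfl fun i _ => ?_
  simp only [and_comm (a := m - i ≤ s), (Commute.pow_pow h3 (r - i) (s - (m - i))).eq,
    mul_comm (qFact q s / _) (qFact q r / _)]

/-- Powers of the annihilation operators acting on the vectors `ξ_{r,s} = c^r c_r^s ξ`.
Terms whose index would be negative are interpreted as `0`. -/
theorem annihilation_pow_on_xi (q : ℝ) (hq₁ : -1 < q) (hq₂ : q < 1)
    {H : Type*} [NormedAddCommGroup H] [InnerProductSpace ℂ H] [CompleteSpace H]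
    (c cr W : H →L[ℂ] H)
    (h1 : adjoint c * c = (q : ℂ) • (c * adjoint c) + 1)
    (h2 : adjoint cr * cr = (q : ℂ) • (cr * adjoint cr) + 1)
    (h3 : c * cr = cr * c)
    (h4 : adjoint c * cr = cr * adjoint c + W)
    (h5 : adjoint cr * c = c * adjoint cr + W)
    (h6 : W * c = (q : ℂ) • (c * W))
    (h7 : W * cr = (q : ℂ) • (cr * W))
    (h8 : adjoint c * W = (q : ℂ) • (W * adjoint c))
    (h9 : adjoint cr * W = (q : ℂ) • (W * adjoint cr))
    (k : ℕ) (ξ : H) (hξ : ‖ξ‖ = 1)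
    (hc : adjoint c ξ = 0) (hcr : adjoint cr ξ = 0)
    (hW : W ξ = ((q : ℂ) ^ k) • ξ) (r s m : ℕ) :
    (((adjoint c) ^ m) ((c ^ r * cr ^ s) ξ) =
      ∑ i ∈ Finset.range (m + 1),
        if m - i ≤ r ∧ i ≤ s then
          ((qFact q r / qFact q (r - (m - i)) * (qFact q s / qFact q (s - i)) *
            qBinom q m i * q ^ ((k + r - (m - i)) * i) : ℝ) : ℂ) •
            ((c ^ (r - (m - i)) * cr ^ (s - i)) ξ)
        else 0) ∧
    (((adjoint cr) ^ m) ((c ^ r * cr ^ s) ξ) =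
      ∑ i ∈ Finset.range (m + 1),
        if i ≤ r ∧ m - i ≤ s then
          ((qFact q r / qFact q (r - i) * (qFact q s / qFact q (s - (m - i))) *
            qBinom q m i * q ^ ((k + s - (m - i)) * i) : ℝ) : ℂ) •
            ((c ^ (r - i) * cr ^ (s - (m - i))) ξ)
        else 0) :=
  annihilation_pow_on_xi_general q hq₁ hq₂ c cr W h1 h2 h3 h4 h5 h6 h7 k ξ hc hcr hW r s m
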